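/- If ρ_{BC} = ρ_L ⊗ |ψ⟩⟨ψ|_{RC} where H_B = H_L ⊗ H_R, ρ_L is a density matrix on H_L, and |ψ⟩ is a unit vector in H_R ⊗ H_C, then S(ρ_{BC}) = S(ρ_B) − S(ρ_C), where ρ_B = Tr_C ρ_{BC} and ρ_C = Tr_B ρ_{BC}. (Sufficiency direction of the Araki–Lieb saturation condition.) -/

import Mathlib

/-!
For a Hermitian matrix the entropy is a sum over the roots of the characteristic polynomial,
and zero roots contribute `0 log 0 = 0`; so the entropy is unchanged by reindexing, transposing,
and by passing between `M Mᴴ` and `Mᴴ M`, whose characteristic polynomials agree up to powers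
of `X`. Since `-xy log(xy) = -y x log x - x y log y`, entropy is additive on Kronecker products of
unit-trace matrices, and a pure state `v vᴴ` has the entropy of the `1 × 1` matrix `vᴴ v = 1`,
namely zero. Writing `M r c = ψ (r, c)`, the reduced states are `ρ_B = ρ_L ⊗ M Mᴴ` and
`ρ_C = (Mᴴ M)ᵀ`, hence `S(ρ_BC) = S(ρ_L)`, `S(ρ_B) = S(ρ_L) + S(M Mᴴ)` and
`S(ρ_C) = S(M Mᴴ)`.
-/

open Matrix Kronecker BigOperators
open scoped ComplexOrder

noncomputable section

/-- Partial trace over the second (right) tensor factor. -/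
def ptraceRight {m n : Type*} [Fintype n]
    (ρ : Matrix (m × n) (m × n) ℂ) : Matrix m m ℂ :=
  fun i j => ∑ k : n, ρ (i, k) (j, k)

/-- Partial trace over the first (left) tensor factor. -/
def ptraceLeft {m n : Type*} [Fintype m]
    (ρ : Matrix (m × n) (m × n) ℂ) : Matrix n n ℂ :=
  fun i j => ∑ k : m, ρ (k, i) (k, j)

/-- Partial trace of a tripartite state over the last factor. -/
def trC {a b c : Type*} [Fintype c]
    (ρ : Matrix (a × b × c) (a × b × c) ℂ) : Matrix (a × b) (a × b) ℂ :=
  fun i j => ∑ k : c, ρ (i.1, i.2, k) (j.1, j.2, k)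

/-- Partial trace of a tripartite state over the first and last factors. -/
def trAC {a b c : Type*} [Fintype a] [Fintype c]
    (ρ : Matrix (a × b × c) (a × b × c) ℂ) : Matrix b b ℂ :=
  fun i j => ∑ x : a, ∑ k : c, ρ (x, i, k) (x, j, k)

/-- A density matrix: positive semidefinite with unit trace. -/
def IsDensity {n : Type*} [Fintype n] (ρ : Matrix n n ℂ) : Prop :=
  ρ.PosSemidef ∧ ρ.trace = 1

/-- Von Neumann entropy `S(ρ) = -Tr (ρ log ρ)`, computed from the eigenvalues. -/
def vNEntropy {n : Type*} [Fintype n] [DecidableEq n] (ρ : Matrix n n ℂ) : ℝ :=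
  if h : ρ.IsHermitian then -∑ i, (h.eigenvalues i * Real.log (h.eigenvalues i)) else 0

/-- `Φ ⊗ 1` : a map on the first tensor factor extended by the identity. -/
def tensorId {h h' k : Type*}
    (Φ : Matrix h h ℂ → Matrix h' h' ℂ)
    (ρ : Matrix (h × k) (h × k) ℂ) : Matrix (h' × k) (h' × k) ℂ :=
  fun i j => Φ (fun x y => ρ (x, i.2) (y, j.2)) i.1 j.1

/-- `1 ⊗ Φ` : a map on the second tensor factor extended by the identity. -/
def idTensor {h h' k : Type*}
    (Φ : Matrix h h ℂ → Matrix h' h' ℂ)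
    (ρ : Matrix (k × h) (k × h) ℂ) : Matrix (k × h') (k × h') ℂ :=
  fun i j => Φ (fun x y => ρ (i.1, x) (j.1, y)) i.2 j.2

/-- A quantum channel: linear, trace preserving and completely positive map. -/
structure QChannel (m n : Type*) [Fintype m] [Fintype n] where
  map : Matrix m m ℂ → Matrix n n ℂ
  linear : ∀ (a b : ℂ) (ρ σ : Matrix m m ℂ), map (a • ρ + b • σ) = a • map ρ + b • map σ
  trace_preserving : ∀ ρ : Matrix m m ℂ, (map ρ).trace = ρ.trace
  completely_positive : ∀ (d : ℕ) (ρ : Matrix (m × Fin d) (m × Fin d) ℂ),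
    ρ.PosSemidef → (tensorId map ρ).PosSemidef

/-- Pure state projector `|v⟩⟨v|`. -/
def proj {n : Type*} (v : n → ℂ) : Matrix n n ℂ := Matrix.vecMulVec v (star v)

/-- Unit vector. -/
def IsUnit' {n : Type*} [Fintype n] (v : n → ℂ) : Prop := ∑ i, Complex.normSq (v i) = 1

open Polynomial Real

theorem vNEntropy_eq_sum_roots {n : Type*} [Fintype n] [DecidableEq n] {A : Matrix n n ℂ}
    (hA : A.IsHermitian) :
    vNEntropy A = (A.charpoly.roots.map fun z => negMulLog z.re).sum := by
  rw [vNEntropy, dif_pos hA, hA.roots_charpoly_eq_eigenvalues, Multiset.map_map,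
    ← Finset.sum_neg_distrib]
  simp [negMulLog, Finset.sum_map_val]

theorem vNEntropy_eq_of_X_pow_mul_charpoly_eq {n m : Type*} [Fintype n] [DecidableEq n]
    [Fintype m] [DecidableEq m] {A : Matrix n n ℂ} {B : Matrix m m ℂ}
    (hA : A.IsHermitian) (hB : B.IsHermitian) {k l : ℕ}
    (h : X ^ k * A.charpoly = X ^ l * B.charpoly) :
    vNEntropy A = vNEntropy B := by
  have hroots := congrArg (fun p : ℂ[X] => (p.roots.map fun z => negMulLog z.re).sum) h
  simpa [roots_mul, A.charpoly_monic.ne_zero, B.charpoly_monic.ne_zero, Multiset.map_nsmul,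
    Multiset.sum_nsmul, ← vNEntropy_eq_sum_roots hA, ← vNEntropy_eq_sum_roots hB] using hroots

theorem vNEntropy_eq_of_charpoly_eq {n m : Type*} [Fintype n] [DecidableEq n]
    [Fintype m] [DecidableEq m] {A : Matrix n n ℂ} {B : Matrix m m ℂ}
    (hA : A.IsHermitian) (hB : B.IsHermitian) (h : A.charpoly = B.charpoly) :
    vNEntropy A = vNEntropy B :=
  vNEntropy_eq_of_X_pow_mul_charpoly_eq hA hB (k := 0) (l := 0) (by simpa using h)

theorem vNEntropy_eq_sum_of_charpoly_eq_prod {n ι : Type*} [Fintype n] [DecidableEq n]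
    [Fintype ι] {A : Matrix n n ℂ} (hA : A.IsHermitian) (d : ι → ℝ)
    (h : A.charpoly = ∏ i, (X - C (d i : ℂ))) :
    vNEntropy A = ∑ i, negMulLog (d i) := by
  rw [vNEntropy_eq_sum_roots hA, h,
    roots_prod _ _ (by simp [Finset.prod_ne_zero_iff, X_sub_C_ne_zero])]
  simp [Finset.sum_map_val]

theorem vNEntropy_one {n : Type*} [Fintype n] [DecidableEq n] :
    vNEntropy (1 : Matrix n n ℂ) = 0 := by
  rw [vNEntropy_eq_sum_of_charpoly_eq_prod isHermitian_one (fun _ : n => 1)] <;>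
    simp [charpoly_one]

theorem vNEntropy_mul_conjTranspose_comm {m n : Type*} [Fintype m] [DecidableEq m]
    [Fintype n] [DecidableEq n] (M : Matrix m n ℂ) :
    vNEntropy (M * Mᴴ) = vNEntropy (Mᴴ * M) :=
  vNEntropy_eq_of_X_pow_mul_charpoly_eq (isHermitian_mul_conjTranspose_self M)
    (isHermitian_conjTranspose_mul_self M) (charpoly_mul_comm' M Mᴴ)

theorem vNEntropy_transpose {n : Type*} [Fintype n] [DecidableEq n] {A : Matrix n n ℂ}
    (hA : A.IsHermitian) : vNEntropy Aᵀ = vNEntropy A :=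
  vNEntropy_eq_of_charpoly_eq hA.transpose hA (charpoly_transpose A)

theorem vNEntropy_reindex {n m : Type*} [Fintype n] [DecidableEq n] [Fintype m] [DecidableEq m]
    {A : Matrix n n ℂ} (hA : A.IsHermitian) (e : n ≃ m) :
    vNEntropy (reindex e e A) = vNEntropy A :=
  vNEntropy_eq_of_charpoly_eq ((isHermitian_submatrix_equiv e.symm).mpr hA) hA
    (charpoly_reindex e A)

theorem Matrix.IsHermitian.kronecker {n m : Type*} {A : Matrix n n ℂ} {B : Matrix m m ℂ}
    (hA : A.IsHermitian) (hB : B.IsHermitian) : (A ⊗ₖ B).IsHermitian := by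
  rw [IsHermitian, conjTranspose_kronecker, hA.eq, hB.eq]

theorem Matrix.IsHermitian.charpoly_kronecker {n m : Type*} [Fintype n] [DecidableEq n]
    [Fintype m] [DecidableEq m] {A : Matrix n n ℂ} {B : Matrix m m ℂ}
    (hA : A.IsHermitian) (hB : B.IsHermitian) :
    (A ⊗ₖ B).charpoly =
      ∏ p : n × m, (X - C ((hA.eigenvalues p.1 * hB.eigenvalues p.2 : ℝ) : ℂ)) := by
  set U : Matrix n n ℂ := (hA.eigenvectorUnitary : Matrix n n ℂ)
  set V : Matrix m m ℂ := (hB.eigenvectorUnitary : Matrix m m ℂ)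
  have hAB : A ⊗ₖ B = (U ⊗ₖ V) * (diagonal (RCLike.ofReal ∘ hA.eigenvalues) ⊗ₖ
      diagonal (RCLike.ofReal ∘ hB.eigenvalues)) * star (U ⊗ₖ V) := by
    rw [star_eq_conjTranspose, conjTranspose_kronecker, ← mul_kronecker_mul,
      ← mul_kronecker_mul]
    conv_lhs => rw [hA.spectral_theorem, hB.spectral_theorem]
    rfl
  have hUV : star (U ⊗ₖ V) * (U ⊗ₖ V) = 1 := by
    rw [star_eq_conjTranspose, conjTranspose_kronecker, ← mul_kronecker_mul,
      ← star_eq_conjTranspose, ← star_eq_conjTranspose, Unitary.coe_star_mul_self,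
      Unitary.coe_star_mul_self, one_kronecker_one]
  rw [hAB, charpoly_mul_comm, ← mul_assoc, hUV, one_mul, diagonal_kronecker_diagonal,
    charpoly_diagonal]
  simp

theorem Matrix.IsHermitian.sum_eigenvalues_eq_one {n : Type*} [Fintype n] [DecidableEq n]
    {A : Matrix n n ℂ} (hA : A.IsHermitian) (htr : A.trace = 1) :
    ∑ i, hA.eigenvalues i = 1 := by
  have h : ((∑ i, hA.eigenvalues i : ℝ) : ℂ) = 1 := by
    simpa [htr] using hA.trace_eq_sum_eigenvalues.symm
  exact_mod_cast h

theorem vNEntropy_kronecker {n m : Type*} [Fintype n] [DecidableEq n]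
    [Fintype m] [DecidableEq m] {A : Matrix n n ℂ} {B : Matrix m m ℂ}
    (hA : A.IsHermitian) (hB : B.IsHermitian) (htrA : A.trace = 1) (htrB : B.trace = 1) :
    vNEntropy (A ⊗ₖ B) = vNEntropy A + vNEntropy B := by
  rw [vNEntropy_eq_sum_of_charpoly_eq_prod (hA.kronecker hB) _ (hA.charpoly_kronecker hB),
    vNEntropy, dif_pos hA, vNEntropy, dif_pos hB, Fintype.sum_prod_type]
  simp only [negMulLog_mul, Finset.sum_add_distrib, ← Finset.mul_sum, ← Finset.sum_mul,
    hA.sum_eigenvalues_eq_one htrA, hB.sum_eigenvalues_eq_one htrB]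
  simp [negMulLog, Finset.sum_neg_distrib]

theorem IsUnit'.star_dotProduct_self {n : Type*} [Fintype n] {v : n → ℂ} (hv : IsUnit' v) :
    star v ⬝ᵥ v = 1 := by
  have hterm : ∀ i, star (v i) * v i = (Complex.normSq (v i) : ℂ) := fun i => by
    rw [mul_comm, Complex.star_def, Complex.mul_conj]
  simp only [dotProduct, Pi.star_apply, hterm]
  exact_mod_cast hv

theorem proj_eq_replicateCol_mul_conjTranspose {n : Type*} (v : n → ℂ) :
    proj v = replicateCol Unit v * (replicateCol Unit v)ᴴ := by
  rw [conjTranspose_replicateCol, proj, vecMulVec_eq Unit]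

theorem isHermitian_proj {n : Type*} [Fintype n] (v : n → ℂ) : (proj v).IsHermitian :=
  (posSemidef_vecMulVec_self_star v).isHermitian

theorem trace_proj {n : Type*} [Fintype n] {v : n → ℂ} (hv : IsUnit' v) :
    (proj v).trace = 1 := by
  rw [proj, trace_vecMulVec, dotProduct_comm, hv.star_dotProduct_self]

theorem vNEntropy_proj {n : Type*} [Fintype n] [DecidableEq n] {v : n → ℂ} (hv : IsUnit' v) :
    vNEntropy (proj v) = 0 := by
  have hgram : (replicateCol Unit v)ᴴ * replicateCol Unit v = 1 := by
    ext
    simp [hv.star_dotProduct_self]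
  rw [proj_eq_replicateCol_mul_conjTranspose, vNEntropy_mul_conjTranspose_comm, hgram,
    vNEntropy_one]

theorem trace_ptraceRight {m n : Type*} [Fintype m] [Fintype n]
    (ρ : Matrix (m × n) (m × n) ℂ) :
    (ptraceRight ρ).trace = ρ.trace := by
  simp only [trace, diag, ptraceRight, Fintype.sum_prod_type]

theorem ptraceRight_proj {m n : Type*} [Fintype n] (ψ : m × n → ℂ) :
    ptraceRight (proj ψ) = of (Function.curry ψ) * (of (Function.curry ψ))ᴴ := by
  ext i j
  simp [ptraceRight, proj, vecMulVec_apply, mul_apply]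

theorem ptraceLeft_proj {m n : Type*} [Fintype m] (ψ : m × n → ℂ) :
    ptraceLeft (proj ψ) = ((of (Function.curry ψ))ᴴ * of (Function.curry ψ))ᵀ := by
  ext i j
  simp [ptraceLeft, proj, vecMulVec_apply, mul_apply, mul_comm]

theorem ptraceRight_reindex_kronecker {l m n : Type*} [Fintype n] (A : Matrix l l ℂ)
    (B : Matrix (m × n) (m × n) ℂ) :
    ptraceRight (reindex (Equiv.prodAssoc l m n).symm (Equiv.prodAssoc l m n).symm (A ⊗ₖ B)) =
      A ⊗ₖ ptraceRight B := by
  ext ⟨i, i'⟩ ⟨j, j'⟩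
  simp [ptraceRight, Finset.mul_sum]

theorem ptraceLeft_reindex_kronecker {l m n : Type*} [Fintype l] [Fintype m] (A : Matrix l l ℂ)
    (B : Matrix (m × n) (m × n) ℂ) :
    ptraceLeft (reindex (Equiv.prodAssoc l m n).symm (Equiv.prodAssoc l m n).symm (A ⊗ₖ B)) =
      A.trace • ptraceLeft B := by
  ext i j
  simp only [ptraceLeft, reindex_apply, submatrix_apply, Equiv.symm_symm, Equiv.prodAssoc_apply,
    kroneckerMap_apply, Matrix.smul_apply, smul_eq_mul, trace, diag, Fintype.sum_prod_type,
    Finset.sum_mul_sum]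

/-- sufficiency direction of the Araki–Lieb saturation condition. -/
theorem arakiLieb_saturation_of_product {L R C : Type*}
    [Fintype L] [Fintype R] [Fintype C] [DecidableEq L] [DecidableEq R] [DecidableEq C]
    (ρL : Matrix L L ℂ) (hρL : IsDensity ρL)
    (ψ : R × C → ℂ) (hψ : IsUnit' ψ)
    (ρBC : Matrix ((L × R) × C) ((L × R) × C) ℂ)
    (hρBC : ρBC = Matrix.reindex (Equiv.prodAssoc L R C).symm (Equiv.prodAssoc L R C).symm
        (ρL ⊗ₖ proj ψ)) :
    vNEntropy ρBC = vNEntropy (ptraceRight ρBC) - vNEntropy (ptraceLeft ρBC) := by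
  obtain ⟨hρL_psd, htrL⟩ := hρL
  have hL := hρL_psd.isHermitian
  have hP := isHermitian_proj ψ
  set M : Matrix R C ℂ := of (Function.curry ψ)
  have htrM : (M * Mᴴ).trace = 1 := by
    rw [← ptraceRight_proj, trace_ptraceRight, trace_proj hψ]
  have hSBC : vNEntropy ρBC = vNEntropy ρL := by
    rw [hρBC, vNEntropy_reindex (hL.kronecker hP), vNEntropy_kronecker hL hP htrL (trace_proj hψ),
      vNEntropy_proj hψ, add_zero]
  have hSB : vNEntropy (ptraceRight ρBC) = vNEntropy ρL + vNEntropy (M * Mᴴ) := by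
    rw [hρBC, ptraceRight_reindex_kronecker, ptraceRight_proj,
      vNEntropy_kronecker hL (isHermitian_mul_conjTranspose_self M) htrL htrM]
  have hSC : vNEntropy (ptraceLeft ρBC) = vNEntropy (M * Mᴴ) := by
    rw [hρBC, ptraceLeft_reindex_kronecker, htrL, one_smul, ptraceLeft_proj,
      vNEntropy_transpose (isHermitian_conjTranspose_mul_self M), vNEntropy_mul_conjTranspose_comm]
  rw [hSBC, hSB, hSC]
  ring
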